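/- Let (X,d) be a compact metric space and (f_n) a sequence of continuous self-maps that is either finitely generated (each f_n belongs to a fixed finite set F of continuous self-maps) or converges uniformly to a map f. If (X, f_{1,∞}) is sensitive, then for every k ∈ ℕ the k-th iterate system (X, f_{1,∞}^{[k]}) is sensitive. -/

import Mathlib

/-!
Under either hypothesis the maps `f n` form a uniformly equicontinuous family, hence so do all
blocks `f (m + r - 1) ∘ ⋯ ∘ f m` of length `r < k`. Given a pair `x, y ∈ U` separated by more than
`δ` at time `n = k m + r`, the block of length `r` starting at time `k m` forces `x, y` to be
separated by a fixed `δ' > 0` already at time `k m`.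
-/

open Filter

variable {X : Type*}

/-- `orb f n = f_n ∘ ⋯ ∘ f_1` (0-based: `f k` is the `(k+1)`-st map). -/
def orb (f : ℕ → X → X) : ℕ → X → X
  | 0 => id
  | n + 1 => f n ∘ orb f n

/-- Sensitivity of the non-autonomous system along the time sequence `τ`. -/
def Sensitive [MetricSpace X] (f : ℕ → X → X) (τ : ℕ → ℕ) : Prop :=
  ∃ δ > 0, ∀ U : Set X, IsOpen U → U.Nonempty →
    ∃ x ∈ U, ∃ y ∈ U, ∃ n : ℕ, δ < dist (orb f (τ n) x) (orb f (τ n) y)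

section Equicontinuity

variable {ι κ α β γ : Type*}

theorem UniformEquicontinuous.comp_indexwise [UniformSpace α] [UniformSpace β] [UniformSpace γ]
    {F : ι → β → γ} {G : ι → α → β} (hF : UniformEquicontinuous F)
    (hG : UniformEquicontinuous G) : UniformEquicontinuous fun i => F i ∘ G i :=
  fun U hU => (hG _ (hF U hU)).mono fun _ h i => h i i

theorem uniformEquicontinuous_uncurry_of_finite [Finite κ] [UniformSpace α] [UniformSpace β]
    {F : ι × κ → α → β} (hF : ∀ j, UniformEquicontinuous fun i => F (i, j)) :
    UniformEquicontinuous F :=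
  fun U hU => (eventually_all.2 fun j => hF j U hU).mono fun _ h p => h p.2 p.1

theorem uniformEquicontinuous_of_forall_mem_finite [UniformSpace α] [CompactSpace α]
    [UniformSpace β] {S : Set (α → β)} (hS : S.Finite) (hSc : ∀ g ∈ S, Continuous g)
    {F : ι → α → β} (hFS : ∀ i, F i ∈ S) : UniformEquicontinuous F := by
  have : Finite S := hS.to_subtype
  have hSeq : UniformEquicontinuous ((↑) : S → α → β) := uniformEquicontinuous_finite.2
    fun g => CompactSpace.uniformContinuous_of_continuous (hSc g g.2)
  exact hSeq.comp fun i => ⟨F i, hFS i⟩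

theorem TendstoUniformly.uniformEquicontinuous [PseudoMetricSpace α] [CompactSpace α]
    [PseudoMetricSpace β] {F : ℕ → α → β} {g : α → β} (hF : ∀ n, Continuous (F n))
    (hFg : TendstoUniformly F g atTop) : UniformEquicontinuous F := by
  have hg : UniformContinuous g :=
    CompactSpace.uniformContinuous_of_continuous (hFg.continuous (.of_forall hF))
  have hhead (N : ℕ) : UniformEquicontinuous fun n : Fin N => F n :=
    uniformEquicontinuous_finite.2 fun n => CompactSpace.uniformContinuous_of_continuous (hF n)
  rw [Metric.uniformEquicontinuous_iff]
  intro ε hε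
  obtain ⟨N, hN⟩ :=
    (Metric.tendstoUniformly_iff.1 hFg (ε / 3) (by positivity)).exists_forall_of_atTop
  obtain ⟨δ₁, hδ₁, h₁⟩ := Metric.uniformEquicontinuous_iff.1 (hhead N) ε hε
  obtain ⟨δ₂, hδ₂, h₂⟩ := Metric.uniformContinuous_iff.1 hg (ε / 3) (by positivity)
  refine ⟨min δ₁ δ₂, lt_min hδ₁ hδ₂, fun x y hxy n => ?_⟩
  rcases lt_or_ge n N with hn | hn
  · exact h₁ x y (hxy.trans_le (min_le_left _ _)) ⟨n, hn⟩
  · calc dist (F n x) (F n y) ≤ dist (F n x) (g x) + dist (g x) (g y) + dist (g y) (F n y) :=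
          dist_triangle4 _ _ _ _
      _ < ε / 3 + ε / 3 + ε / 3 := by
          gcongr
          · exact dist_comm (g x) (F n x) ▸ hN n hn x
          · exact h₂ (hxy.trans_le (min_le_right _ _))
          · exact hN n hn y
      _ = ε := by ring

end Equicontinuity

theorem orb_add (f : ℕ → X → X) (a b : ℕ) (x : X) :
    orb f (a + b) x = orb (fun j => f (a + j)) b (orb f a x) := by
  induction b with
  | zero => rfl
  | succ b ih => exact congrArg (f (a + b)) ih

theorem UniformEquicontinuous.orb_shift [UniformSpace X] {f : ℕ → X → X}
    (hf : UniformEquicontinuous f) (r : ℕ) :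
    UniformEquicontinuous fun m => orb (fun j => f (m + j)) r := by
  induction r with
  | zero => exact fun U hU => mem_of_superset hU fun _ h _ => h
  | succ r ih => exact (hf.comp (· + r)).comp_indexwise ih

theorem Sensitive.mul_of_uniformEquicontinuous [MetricSpace X] {f : ℕ → X → X}
    (hsen : Sensitive f id) (hf : UniformEquicontinuous f) {k : ℕ} (hk : 0 < k) :
    Sensitive f (k * ·) := by
  obtain ⟨δ, hδ, hsen⟩ := hsen
  have hblocks : UniformEquicontinuous fun p : ℕ × Fin k => orb (fun j => f (p.1 + j)) p.2 :=
    uniformEquicontinuous_uncurry_of_finite fun r => hf.orb_shift r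
  obtain ⟨δ', hδ', hblock⟩ := Metric.uniformEquicontinuous_iff.1 hblocks δ hδ
  refine ⟨δ' / 2, half_pos hδ', fun U hU hUne => ?_⟩
  obtain ⟨x, hx, y, hy, n, hn⟩ := hsen U hU hUne
  refine ⟨x, hx, y, hy, n / k, ?_⟩
  by_contra! hclose
  have hfar : dist (orb (fun j => f (k * (n / k) + j)) (n % k) (orb f (k * (n / k)) x))
      (orb (fun j => f (k * (n / k) + j)) (n % k) (orb f (k * (n / k)) y)) < δ :=
    hblock _ _ (hclose.trans_lt (half_lt_self hδ')) (k * (n / k), ⟨n % k, Nat.mod_lt n hk⟩)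
  rw [← orb_add, ← orb_add, Nat.div_add_mod] at hfar
  exact hfar.not_gt hn

theorem stmt_8 [MetricSpace X] [CompactSpace X] (f : ℕ → X → X)
    (hf : ∀ n, Continuous (f n))
    (hgen : (∃ F : Set (X → X), F.Finite ∧ (∀ g ∈ F, Continuous g) ∧ ∀ n, f n ∈ F) ∨
      (∃ g : X → X, TendstoUniformly f g atTop))
    (hsen : Sensitive f id) (k : ℕ) (hk : 0 < k) :
    Sensitive f (fun n => k * n) := by
  have hequi : UniformEquicontinuous f := by
    rcases hgen with ⟨F, hF, hFc, hfF⟩ | ⟨g, hfg⟩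
    · exact uniformEquicontinuous_of_forall_mem_finite hF hFc hfF
    · exact hfg.uniformEquicontinuous hf
  exact hsen.mul_of_uniformEquicontinuous hequi hk
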